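/- On the surface X = {(x,y,z) ∈ ℂ³ : x·z − y² + 1 = 0}, the quotient map to the orbit space of the additive ℂ-action t·(x,y,z) = (x, y+xt, z+2yt+xt²) separates orbits via the invariant x together with the sign of y on the locus x = 0: two points p = (x,y,z) and p' = (x',y',z') of X lie in the same orbit if and only if x = x' and, in case x = x' = 0, additionally y = y'. -/

import Mathlib

def actX (t : ℂ) (p : ℂ × ℂ × ℂ) : ℂ × ℂ × ℂ :=
  (p.1, p.2.1 + p.1 * t, p.2.2 + 2 * p.2.1 * t + p.1 * t ^ 2)

/-!
Reading `(x, y, z)` as the symmetric matrix `M = [[x, y], [y, z]]`, the action is the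
congruence `M ↦ Pᵀ M P` with `P = [[1, t], [0, 1]]`, so `x` and `det M = xz - y²` are
invariant (`X` is the level set `det M = -1`), and so is `y` when `x = 0`. Conversely, for
`x ≠ 0` the parameter `t = (y' - y) / x` matches the `y`-coordinates and then `det M` pins down
`z`; for `x = 0` we have `det M = -y² ≠ 0`, so `t = (z' - z) / (2y)` matches the `z`-coordinates.
-/

def symmDet (p : ℂ × ℂ × ℂ) : ℂ := p.1 * p.2.2 - p.2.1 ^ 2

theorem symmDet_actX (t : ℂ) (p : ℂ × ℂ × ℂ) : symmDet (actX t p) = symmDet p := by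
  simp only [symmDet, actX]
  ring

theorem actX_fst (t : ℂ) (p : ℂ × ℂ × ℂ) : (actX t p).1 = p.1 := rfl

theorem actX_snd_fst_of_fst_eq_zero {p : ℂ × ℂ × ℂ} (hx : p.1 = 0) (t : ℂ) :
    (actX t p).2.1 = p.2.1 := by
  simp [actX, hx]

theorem exists_actX_eq_of_fst_ne_zero {p p' : ℂ × ℂ × ℂ} (hx : p.1 ≠ 0) (hx' : p.1 = p'.1)
    (hdet : symmDet p = symmDet p') : ∃ t, actX t p = p' := by
  obtain ⟨x, y, z⟩ := p
  obtain ⟨x', y', z'⟩ := p'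
  dsimp only at hx hx'
  subst hx'
  refine ⟨(y' - y) / x, ?_⟩
  have hy : y + x * ((y' - y) / x) = y' := by field_simp; ring
  have hdet' := symmDet_actX ((y' - y) / x) (x, y, z)
  simp only [actX, Prod.mk.injEq, true_and] at hdet' ⊢
  refine ⟨hy, mul_left_cancel₀ hx ?_⟩
  simp only [symmDet, hy] at hdet hdet'
  linear_combination hdet' + hdet

theorem exists_actX_eq_of_fst_eq_zero {p p' : ℂ × ℂ × ℂ} (hx : p.1 = 0) (hdet : symmDet p ≠ 0)
    (hx' : p'.1 = 0) (hy : p.2.1 = p'.2.1) : ∃ t, actX t p = p' := by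
  obtain ⟨x, y, z⟩ := p
  obtain ⟨x', y', z'⟩ := p'
  dsimp only at hx hx' hy
  subst hx hx' hy
  have hy0 : y ≠ 0 := by
    rintro rfl
    simp [symmDet] at hdet
  refine ⟨(z' - z) / (2 * y), ?_⟩
  simp only [actX, Prod.mk.injEq, zero_mul, add_zero, true_and]
  field_simp
  ring

/-- On `X = {xz − y² + 1 = 0}` with the additive `ℂ`-action
`t·(x,y,z) = (x, y+xt, z+2yt+xt²)`, two points lie in the same orbit if and only
if their `x`-coordinates agree and, in case the common `x`-coordinate is `0`,
their `y`-coordinates also agree. -/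
theorem actX_orbit_characterization :
    ∀ p p' : ℂ × ℂ × ℂ,
      p.1 * p.2.2 - p.2.1 ^ 2 + 1 = 0 → p'.1 * p'.2.2 - p'.2.1 ^ 2 + 1 = 0 →
      ((∃ t : ℂ, actX t p = p') ↔ (p.1 = p'.1 ∧ (p.1 = 0 → p.2.1 = p'.2.1))) := by
  intro p p' h h'
  have hdet : symmDet p = -1 := eq_neg_of_add_eq_zero_left h
  have hdet' : symmDet p' = -1 := eq_neg_of_add_eq_zero_left h'
  constructor
  · rintro ⟨t, rfl⟩
    exact ⟨(actX_fst t p).symm, fun hx => (actX_snd_fst_of_fst_eq_zero hx t).symm⟩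
  · rintro ⟨hx, hy⟩
    by_cases hx0 : p.1 = 0
    · exact exists_actX_eq_of_fst_eq_zero hx0 (by simp [hdet]) (hx ▸ hx0) (hy hx0)
    · exact exists_actX_eq_of_fst_ne_zero hx0 hx (hdet.trans hdet'.symm)
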